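/- arXiv:1511.06999 — 2 statements merged into one kernel-verified Lean document; each statement's English description precedes it below -/
import Mathlib

section
/- Suppose V = 0 and H(0) > 0. Then for every ε > 0 there exist a real constant u₀ and a real constant m₀ with 0 < m₀ < 1 + εC for any fixed C > |H(0)|, satisfying u₀ + H(0) = m₀^α + ε·m₀ and m₀ = 1 − ε·u₀; hence the constant pair (u₀, m₀) solves Problem 1 with V = 0 for every ε > 0. -/
open Set intervalIntegral

noncomputable section

/-- `f : ℝ → ℝ` is ½-Hölder continuous: there is `K ≥ 0` with
`|f x - f y| ≤ K * |x - y| ^ (1/2)` for all `x y`. -/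
def IsHolderHalf (f : ℝ → ℝ) : Prop :=
  ∃ K : ℝ, 0 ≤ K ∧ ∀ x y : ℝ, |f x - f y| ≤ K * |x - y| ^ ((1 : ℝ) / 2)

/-- `f` is a 1-periodic function of class `C²` (a `C²` function on the torus `𝕋`). -/
def MemC2T (f : ℝ → ℝ) : Prop :=
  Function.Periodic f 1 ∧ ContDiff ℝ 2 f

/-- `f ∈ C^{2,1/2}(𝕋)`: 1-periodic, of class `C²`, with ½-Hölder continuous
second derivative. -/
def MemC2HalfT (f : ℝ → ℝ) : Prop :=
  MemC2T f ∧ IsHolderHalf (deriv (deriv f))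

/-- `(u, m)` is a solution of Problem 1 with Hamiltonian `H`, potential `V`,
exponent `α` and parameter `ε`: `u, m` are 1-periodic `C²` functions, `m > 0`
everywhere, and the system
`u - u'' + H(u') + V = m^α + ε (m - m'')`,
`m - m'' - (H'(u') m)' = 1 - ε (u - u'')`
holds pointwise. -/
def SolvesMFG (H V : ℝ → ℝ) (α ε : ℝ) (u m : ℝ → ℝ) : Prop :=
  MemC2T u ∧ MemC2T m ∧ (∀ x, 0 < m x) ∧
  (∀ x : ℝ, u x - deriv (deriv u) x + H (deriv u x) + V x
      = m x ^ α + ε * (m x - deriv (deriv m) x)) ∧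
  (∀ x : ℝ, m x - deriv (deriv m) x
      - deriv (fun y => deriv H (deriv u y) * m y) x
      = 1 - ε * (u x - deriv (deriv u) x))
/-!
For constant `u₀, m₀` all derivatives vanish, so the system reduces to
`u₀ + H 0 = m₀ ^ α + ε m₀` and `m₀ = 1 - ε u₀`. Eliminating `u₀ = (1 - m₀) / ε` leaves
`g m₀ = H 0` with `g m = m ^ α + ε m - (1 - m) / ε` continuous on `[0, ∞)`; since
`g 0 = -1 / ε < H 0` and `g (1 + ε C) > C > H 0`, the intermediate value theorem gives a root
`m₀ ∈ (0, 1 + ε C)`.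
-/

theorem solvesMFG_const {H : ℝ → ℝ} {α ε v u₀ m₀ : ℝ} (hm₀ : 0 < m₀)
    (hu : u₀ + H 0 + v = m₀ ^ α + ε * m₀) (hm : m₀ = 1 - ε * u₀) :
    SolvesMFG H (fun _ => v) α ε (fun _ => u₀) (fun _ => m₀) := by
  refine ⟨⟨fun _ => rfl, contDiff_const⟩, ⟨fun _ => rfl, contDiff_const⟩, fun _ => hm₀,
    fun _ => ?_, fun _ => ?_⟩
  all_goals simp only [deriv_const', deriv_const, sub_zero]; linarith

theorem exists_solution_const_system {α ε h C : ℝ} (hα : 0 < α) (hε : 0 < ε)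
    (hh : 0 < 1 + ε * h) (hC : h ≤ C) :
    ∃ u₀ m₀ : ℝ, 0 < m₀ ∧ m₀ < 1 + ε * C ∧
      u₀ + h = m₀ ^ α + ε * m₀ ∧ m₀ = 1 - ε * u₀ := by
  set b := 1 + ε * C
  have hb : 0 < b := by nlinarith
  set f : ℝ → ℝ := fun m => m ^ α + ε * m - (1 - m) / ε
  have hf : ContinuousOn f (Icc 0 b) := by fun_prop (disch := exact hα.le)
  have hf0 : f 0 < h := by
    have : f 0 = -1 / ε := by simp [f, Real.zero_rpow hα.ne', neg_div]
    rw [this, div_lt_iff₀ hε]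
    linarith
  have hfb : h < f b := by
    have hb' : (1 - b) / ε = -C := by field_simp; ring
    simp only [f, hb']
    nlinarith [Real.rpow_pos_of_pos hb α]
  obtain ⟨m₀, ⟨hm₀, hm₀b⟩, hfm₀⟩ := intermediate_value_Ioo hb.le hf ⟨hf0, hfb⟩
  refine ⟨(1 - m₀) / ε, m₀, hm₀, hm₀b, ?_, by field_simp; ring⟩
  simp only [f] at hfm₀
  linarith

theorem existence_V_zero_H0_pos_general (α : ℝ) (hα : 0 < α)
    (H : ℝ → ℝ) (hH0 : 0 < H 0) :
    ∀ ε : ℝ, 0 < ε → ∀ C : ℝ, |H 0| < C →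
      ∃ u₀ m₀ : ℝ, 0 < m₀ ∧ m₀ < 1 + ε * C ∧
        u₀ + H 0 = m₀ ^ α + ε * m₀ ∧ m₀ = 1 - ε * u₀ ∧
        SolvesMFG H (fun _ => 0) α ε (fun _ => u₀) (fun _ => m₀) := by
  intro ε hε C hC
  obtain ⟨u₀, m₀, hm₀, hm₀C, hu, hm⟩ :=
    exists_solution_const_system hα hε (by positivity : 0 < 1 + ε * H 0)
      ((le_abs_self _).trans hC.le)
  exact ⟨u₀, m₀, hm₀, hm₀C, hu, hm, solvesMFG_const hm₀ (by rw [add_zero, hu]) hm⟩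

/-- For `V = 0` and `H(0) > 0`, for every `ε > 0` and every
`C > |H(0)|` there are constants `u₀` and `m₀` with `0 < m₀ < 1 + ε C`,
`u₀ + H(0) = m₀^α + ε m₀` and `m₀ = 1 - ε u₀`; hence the constant pair
`(u₀, m₀)` solves Problem 1 with `V = 0` for every `ε > 0`. -/
theorem existence_V_zero_H0_pos (α : ℝ) (hα : 0 < α)
    (H : ℝ → ℝ) (hH : ContDiff ℝ 2 H) (hH0 : 0 < H 0) :
    ∀ ε : ℝ, 0 < ε → ∀ C : ℝ, |H 0| < C →
      ∃ u₀ m₀ : ℝ, 0 < m₀ ∧ m₀ < 1 + ε * C ∧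
        u₀ + H 0 = m₀ ^ α + ε * m₀ ∧ m₀ = 1 - ε * u₀ ∧
        SolvesMFG H (fun _ => 0) α ε (fun _ => u₀) (fun _ => m₀) :=
  existence_V_zero_H0_pos_general α hα H hH0
end
end

section
/- Suppose assumptions (A1), (A2), (A3), and (A4) hold. Then there exists a constant C > 0, depending only on γ, α, the constants of (A1)–(A2), and on the C² norm of V, such that for every 0 < ε ≤ 1 and every solution (u, m) of Problem 1, each of the four functions f ∈ {u, u', m, m'} satisfies sup|f| ≤ C/√ε and |f(x) − f(y)| ≤ (C/√ε)·|x − y|^{1/2} for all x, y ∈ [0, 1]; in particular u, u', m, m' are ½-Hölder continuous. -/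
/-!
Test the first equation (HJB) against `1 - m` and the second (FP) against `u`, and then (HJB)
against `m''` and (FP) against `u''`. In both combinations all cross terms are derivatives of
1-periodic functions and drop out after integration over a period.

The first combination gives
`∫ m^(α+1) + ε ∫ (m² + u² + m'² + u'²) = ∫ (H(u') - u' H'(u')) m + V m + m^α + ε m - H(u') - V`.
The lower bounds of (A1) and (A2), together with Young's inequality to absorb `m^α` and `m`
into `m^(α+1)`, bound `ε ∫ u²`. Integrating (FP) gives `∫ m + ε ∫ u = 1`, so this also
controls the means of `u` and `m`.

In the second combination, `∫ H''(u') u''² m` (convexity) and `∫ α m^(α-1) m'²` are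
nonnegative, and what remains is `ε ∫ (u'² + u''² + m'² + m''²) ≤ -∫ V'' m ≤ ‖V''‖∞ ∫ m`.
For `f ∈ {u, u', m, m'}`, Cauchy–Schwarz then gives
`|f x - f y| ≤ ‖f'‖₂ |x - y|^(1/2) ≤ (C/√ε) |x - y|^(1/2)`, and a sup bound follows from this
together with the bound on the mean of `f`.
-/

open Set intervalIntegral

noncomputable section

/-- A bound `KV` on the `C²` norm of `V`. -/
def C2NormBound (KV : ℝ) (V : ℝ → ℝ) : Prop :=
  ∀ x : ℝ, |V x| ≤ KV ∧ |deriv V x| ≤ KV ∧ |deriv (deriv V) x| ≤ KV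

/-- `f` satisfies `sup |f| ≤ K` and is ½-Hölder on `[0,1]` with constant `K`. -/
def SupHolderBound (K : ℝ) (f : ℝ → ℝ) : Prop :=
  (∀ x : ℝ, |f x| ≤ K) ∧
  ∀ x ∈ Set.Icc (0:ℝ) 1, ∀ y ∈ Set.Icc (0:ℝ) 1,
    |f x - f y| ≤ K * |x - y| ^ ((1:ℝ)/2)

open Function

theorem Function.Periodic.deriv {f : ℝ → ℝ} {c : ℝ} (hf : Periodic f c) :
    Periodic (deriv f) c := fun x => by
  rw [← deriv_comp_add_const, show (fun y => f (y + c)) = f from funext hf]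

theorem ContDiff.hasDerivAt_deriv_of_two {f : ℝ → ℝ} (hf : ContDiff ℝ 2 f) (x : ℝ) :
    HasDerivAt (deriv f) (deriv (deriv f) x) x :=
  (hf.deriv'.differentiable one_ne_zero x).hasDerivAt

theorem ContDiff.continuous_deriv_deriv_of_two {f : ℝ → ℝ} (hf : ContDiff ℝ 2 f) :
    Continuous (deriv (deriv f)) :=
  hf.deriv'.continuous_deriv le_rfl

theorem ConvexOn.deriv_deriv_nonneg {f : ℝ → ℝ} (hf : ConvexOn ℝ univ f)
    (hd : Differentiable ℝ f) {x : ℝ} (hd₂ : DifferentiableAt ℝ (deriv f) x) :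
    0 ≤ deriv (deriv f) x :=
  hd₂.hasDerivAt.nonneg_of_monotone (monotoneOn_univ.1 (hf.monotoneOn_deriv fun y _ => hd y))

theorem integral_deriv_eq_zero_of_periodic {Φ φ : ℝ → ℝ} (hΦ : ∀ x, HasDerivAt Φ (φ x) x)
    (hφ : Continuous φ) (hper : Periodic Φ 1) : ∫ x in (0 : ℝ)..1, φ x = 0 := by
  rw [integral_eq_sub_of_hasDerivAt (fun x _ => hΦ x) (hφ.intervalIntegrable 0 1),
    ← zero_add 1, hper 0, sub_self]

theorem Function.Periodic.integral_deriv_eq_zero {f : ℝ → ℝ} (hper : Periodic f 1)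
    (hf : ContDiff ℝ 1 f) : ∫ x in (0 : ℝ)..1, _root_.deriv f x = 0 :=
  integral_deriv_eq_zero_of_periodic (fun x => (hf.differentiable one_ne_zero x).hasDerivAt)
    (hf.continuous_deriv le_rfl) hper

theorem integral_le_integral_of_le_add_deriv {f g Φ φ : ℝ → ℝ} (hf : Continuous f)
    (hg : Continuous g) (hΦ : ∀ x, HasDerivAt Φ (φ x) x) (hφ : Continuous φ)
    (hper : Periodic Φ 1) (hle : ∀ x, f x ≤ g x + φ x) :
    ∫ x in (0 : ℝ)..1, f x ≤ ∫ x in (0 : ℝ)..1, g x := by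
  calc ∫ x in (0 : ℝ)..1, f x ≤ ∫ x in (0 : ℝ)..1, (g x + φ x) :=
        integral_mono zero_le_one (hf.intervalIntegrable 0 1)
          ((hg.add hφ).intervalIntegrable 0 1) hle
    _ = ∫ x in (0 : ℝ)..1, g x := by
        rw [integral_add (hg.intervalIntegrable 0 1) (hφ.intervalIntegrable 0 1),
          integral_deriv_eq_zero_of_periodic hΦ hφ hper, add_zero]

theorem sq_integral_abs_le {g : ℝ → ℝ} (hg : Continuous g) {a b : ℝ} (hab : a ≤ b) :
    (∫ x in a..b, |g x|) ^ 2 ≤ (b - a) * ∫ x in a..b, g x ^ 2 := by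
  -- Cauchy–Schwarz: the quadratic `t ↦ ∫ (t - |g|)²` is nonnegative, so its discriminant is `≤ 0`.
  have hquad : ∀ t : ℝ, 0 ≤ (b - a) * (t * t) + (-2 * ∫ x in a..b, |g x|) * t
      + ∫ x in a..b, g x ^ 2 := fun t => by
    have h : 0 ≤ ∫ x in a..b, (t - |g x|) ^ 2 := integral_nonneg hab fun x _ => sq_nonneg _
    have hexp : ∫ x in a..b, (t - |g x|) ^ 2
        = ∫ x in a..b, (t ^ 2 - 2 * t * |g x| + g x ^ 2) := by
      congr 1; ext x; rw [sub_sq, sq_abs]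
    rw [hexp, integral_add, integral_sub, integral_const, integral_const_mul] at h
    · simp only [smul_eq_mul] at h; nlinarith
    all_goals first
      | exact intervalIntegrable_const
      | exact (hg.abs.const_mul _).intervalIntegrable _ _
      | exact (hg.pow 2).intervalIntegrable _ _
      | exact (continuous_const.sub (hg.abs.const_mul _)).intervalIntegrable _ _
  have := discrim_le_zero hquad
  rw [discrim] at this
  nlinarith

theorem abs_integral_le_of_mul_integral_sq_le {f : ℝ → ℝ} (hf : Continuous f) {K ε : ℝ}
    (hε : 0 < ε) (h : ε * ∫ x in (0 : ℝ)..1, f x ^ 2 ≤ K) :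
    |∫ x in (0 : ℝ)..1, f x| ≤ √K / √ε := by
  have hsq : (∫ x in (0 : ℝ)..1, f x) ^ 2 ≤ ∫ x in (0 : ℝ)..1, f x ^ 2 := by
    rw [← sq_abs]
    calc |∫ x in (0 : ℝ)..1, f x| ^ 2 ≤ (∫ x in (0 : ℝ)..1, |f x|) ^ 2 :=
          pow_le_pow_left₀ (abs_nonneg _) (abs_integral_le_integral_abs zero_le_one) 2
      _ ≤ ∫ x in (0 : ℝ)..1, f x ^ 2 := by simpa using sq_integral_abs_le hf zero_le_one
  rw [← Real.sqrt_div' K hε.le, ← Real.sqrt_sq_eq_abs]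
  exact Real.sqrt_le_sqrt ((le_div_iff₀' hε).2 (h.trans' (mul_le_mul_of_nonneg_left hsq hε.le)))

theorem abs_sub_le_sqrt_integral_sq_mul_rpow {f g : ℝ → ℝ} (hf : ∀ x, HasDerivAt f (g x) x)
    (hg : Continuous g) {x y : ℝ} (hx : x ∈ Icc (0 : ℝ) 1) (hy : y ∈ Icc (0 : ℝ) 1) :
    |f x - f y| ≤ √(∫ t in (0 : ℝ)..1, g t ^ 2) * |x - y| ^ ((1 : ℝ) / 2) := by
  wlog hxy : x ≤ y generalizing x y
  · rw [abs_sub_comm, abs_sub_comm x]; exact this hy hx (le_of_not_ge hxy)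
  have hftc : f y - f x = ∫ t in x..y, g t :=
    (integral_eq_sub_of_hasDerivAt (fun t _ => hf t) (hg.intervalIntegrable x y)).symm
  have hsub : ∫ t in x..y, g t ^ 2 ≤ ∫ t in (0 : ℝ)..1, g t ^ 2 :=
    integral_mono_interval hx.1 hxy hy.2 (Filter.Eventually.of_forall fun t => sq_nonneg (g t))
      ((hg.pow 2).intervalIntegrable 0 1)
  calc |f x - f y| = |∫ t in x..y, g t| := by rw [abs_sub_comm, hftc]
    _ ≤ ∫ t in x..y, |g t| := abs_integral_le_integral_abs hxy
    _ = √((∫ t in x..y, |g t|) ^ 2) :=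
        (Real.sqrt_sq (integral_nonneg hxy fun t _ => abs_nonneg (g t))).symm
    _ ≤ √((y - x) * ∫ t in (0 : ℝ)..1, g t ^ 2) := Real.sqrt_le_sqrt <|
        (sq_integral_abs_le hg hxy).trans (mul_le_mul_of_nonneg_left hsub (by linarith))
    _ = √(∫ t in (0 : ℝ)..1, g t ^ 2) * |x - y| ^ ((1 : ℝ) / 2) := by
        rw [Real.sqrt_mul (by linarith), mul_comm, abs_sub_comm, abs_of_nonneg (by linarith),
          Real.sqrt_eq_rpow (y - x)]

theorem abs_le_abs_integral_add_of_periodic {f : ℝ → ℝ} (hf : Continuous f)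
    (hper : Periodic f 1) {K : ℝ}
    (hosc : ∀ x ∈ Icc (0 : ℝ) 1, ∀ y ∈ Icc (0 : ℝ) 1, |f x - f y| ≤ K) (x : ℝ) :
    |f x| ≤ |∫ t in (0 : ℝ)..1, f t| + K := by
  have hfract : f x = f (Int.fract x) := by
    simpa using (hper.sub_int_mul_eq (n := ⌊x⌋) (x := x)).symm
  have hz : Int.fract x ∈ Icc (0 : ℝ) 1 := ⟨Int.fract_nonneg x, (Int.fract_lt_one x).le⟩
  have hdev : |f (Int.fract x) - ∫ t in (0 : ℝ)..1, f t| ≤ K := by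
    calc |f (Int.fract x) - ∫ t in (0 : ℝ)..1, f t|
        = |∫ t in (0 : ℝ)..1, (f (Int.fract x) - f t)| := by
          rw [integral_sub intervalIntegrable_const (hf.intervalIntegrable 0 1)]; simp
      _ ≤ ∫ t in (0 : ℝ)..1, |f (Int.fract x) - f t| := abs_integral_le_integral_abs zero_le_one
      _ ≤ ∫ _ in (0 : ℝ)..1, K :=
          integral_mono_on zero_le_one ((continuous_const.sub hf).abs.intervalIntegrable 0 1)
            intervalIntegrable_const fun t ht => hosc _ hz t ht
      _ = K := by simp
  rw [hfract]
  linarith [abs_sub_abs_le_abs_sub (f (Int.fract x)) (∫ t in (0 : ℝ)..1, f t)]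

theorem supHolderBound_of_mul_integral_sq_deriv_le {f : ℝ → ℝ} {A K ε : ℝ} (hε : 0 < ε)
    (hper : Periodic f 1) (hf : ContDiff ℝ 1 f)
    (hmean : |∫ t in (0 : ℝ)..1, f t| ≤ A / √ε)
    (henergy : ε * ∫ t in (0 : ℝ)..1, deriv f t ^ 2 ≤ K) :
    SupHolderBound ((A + √K) / √ε) f := by
  have hA : 0 ≤ A / √ε := (abs_nonneg _).trans hmean
  have hL2 : √(∫ t in (0 : ℝ)..1, deriv f t ^ 2) ≤ √K / √ε := by
    rw [← Real.sqrt_div' K hε.le]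
    exact Real.sqrt_le_sqrt ((le_div_iff₀' hε).2 henergy)
  have hholder : ∀ x ∈ Icc (0 : ℝ) 1, ∀ y ∈ Icc (0 : ℝ) 1,
      |f x - f y| ≤ √K / √ε * |x - y| ^ ((1 : ℝ) / 2) := fun x hx y hy =>
    (abs_sub_le_sqrt_integral_sq_mul_rpow (fun z => (hf.differentiable one_ne_zero z).hasDerivAt)
      (hf.continuous_deriv le_rfl) hx hy).trans (mul_le_mul_of_nonneg_right hL2 (by positivity))
  rw [add_div]
  refine ⟨fun x => ?_, fun x hx y hy => (hholder x hx y hy).trans ?_⟩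
  · refine (abs_le_abs_integral_add_of_periodic hf.continuous hper (fun x hx y hy => ?_) x).trans
      (add_le_add hmean le_rfl)
    have hdist : |x - y| ^ ((1 : ℝ) / 2) ≤ 1 :=
      Real.rpow_le_one (abs_nonneg _)
        (abs_sub_le_iff.2 ⟨by linarith [hx.2, hy.1], by linarith [hx.1, hy.2]⟩) (by norm_num)
    exact (hholder x hx y hy).trans (mul_le_of_le_one_right (by positivity) hdist)
  · exact mul_le_mul_of_nonneg_right (le_add_of_nonneg_left hA) (by positivity)

theorem MemC2T.supHolderBound_deriv {f : ℝ → ℝ} (hf : MemC2T f) {A K ε : ℝ} (hε : 0 < ε)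
    (hA : 0 ≤ A) (henergy : ε * ∫ t in (0 : ℝ)..1, deriv (deriv f) t ^ 2 ≤ K) :
    SupHolderBound ((A + √K) / √ε) (deriv f) :=
  supHolderBound_of_mul_integral_sq_deriv_le hε hf.1.deriv hf.2.deriv'
    (by rw [Function.Periodic.integral_deriv_eq_zero hf.1 (hf.2.of_le one_le_two), abs_zero]
        positivity) henergy

theorem Real.rpow_le_rpow_add_rpow_add_div_rpow {β δ s t : ℝ} (hβ : 0 ≤ β) (hδ : 0 ≤ δ)
    (hs : 0 < s) (ht : 0 ≤ t) : t ^ β ≤ s ^ β + t ^ (β + δ) / s ^ δ := by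
  rcases le_or_gt t s with hts | hst
  · have := Real.rpow_le_rpow ht hts hβ
    have : 0 ≤ t ^ (β + δ) / s ^ δ := by positivity
    linarith
  · have hsδ : 0 < s ^ δ := by positivity
    have : s ^ δ ≤ t ^ δ := Real.rpow_le_rpow hs.le hst.le hδ
    have : t ^ β ≤ t ^ β * t ^ δ / s ^ δ := by
      rw [le_div_iff₀ hsδ]; exact mul_le_mul_of_nonneg_left this (by positivity)
    rw [Real.rpow_add (hs.trans hst)]
    linarith [Real.rpow_nonneg hs.le β]

theorem Real.mul_add_rpow_le {α B t : ℝ} (hα : 0 < α) (hB : 0 < B) (ht : 0 ≤ t) :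
    B * t + t ^ α ≤ t ^ (α + 1) + (2 ^ α + B * (2 * B) ^ α⁻¹) := by
  have hpow : t ^ α ≤ 2 ^ α + t ^ (α + 1) / 2 := by
    simpa using Real.rpow_le_rpow_add_rpow_add_div_rpow hα.le zero_le_one two_pos ht
  have hlin : t ≤ (2 * B) ^ α⁻¹ + t ^ (α + 1) / (2 * B) := by
    have hs : ((2 * B) ^ α⁻¹) ^ α = 2 * B := by
      rw [← Real.rpow_mul (by positivity), inv_mul_cancel₀ hα.ne', Real.rpow_one]
    simpa [hs, add_comm 1 α] using Real.rpow_le_rpow_add_rpow_add_div_rpow zero_le_one hα.le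
      (by positivity : 0 < (2 * B) ^ α⁻¹) ht
  have hcancel : B * (t ^ (α + 1) / (2 * B)) = t ^ (α + 1) / 2 := by field_simp
  nlinarith [mul_le_mul_of_nonneg_left hlin hB.le]

section Solution

variable {H V u m : ℝ → ℝ} {α ε : ℝ}

theorem hasDerivAt_deriv_comp_deriv_mul (hH : ContDiff ℝ 2 H) (hu : ContDiff ℝ 2 u)
    (hm : Differentiable ℝ m) (x : ℝ) :
    HasDerivAt (fun y => deriv H (deriv u y) * m y)
      (deriv (deriv H) (deriv u x) * deriv (deriv u) x * m x + deriv H (deriv u x) * deriv m x) x :=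
  ((hH.hasDerivAt_deriv_of_two _).comp x (hu.hasDerivAt_deriv_of_two x)).mul (hm x).hasDerivAt

theorem SolvesMFG.integral_add_mul_integral_eq_one (hsol : SolvesMFG H V α ε u m)
    (hH : ContDiff ℝ 2 H) :
    (∫ x in (0 : ℝ)..1, m x) + ε * ∫ x in (0 : ℝ)..1, u x = 1 := by
  obtain ⟨⟨hup, hu⟩, ⟨hmp, hm⟩, -, -, hfp⟩ := hsol
  have hflux := hasDerivAt_deriv_comp_deriv_mul hH hu (hm.differentiable two_ne_zero)
  have hΦ : ∀ x, HasDerivAt (fun y => deriv m y + deriv H (deriv u y) * m y + ε * deriv u y)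
      (m x + ε * u x - 1) x := fun x =>
    (((hm.hasDerivAt_deriv_of_two x).add (hflux x)).add
      ((hu.hasDerivAt_deriv_of_two x).const_mul ε)).congr_deriv
      (by linear_combination -hfp x - (hflux x).deriv)
  have hzero := integral_deriv_eq_zero_of_periodic hΦ (by fun_prop) fun x => by
    simp only [hmp.deriv x, hup.deriv x, hmp x]
  have hmc := hm.continuous
  have huc := hu.continuous
  rw [integral_sub ((by fun_prop : Continuous fun x => m x + ε * u x).intervalIntegrable 0 1)
    intervalIntegrable_const, integral_add (hmc.intervalIntegrable 0 1)
    ((huc.const_mul ε).intervalIntegrable 0 1), integral_const_mul] at hzero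
  simpa [sub_eq_zero] using hzero

theorem SolvesMFG.mul_integral_sq_le (hsol : SolvesMFG H V α ε u m) (hH : ContDiff ℝ 2 H)
    (hα : 0 < α) (hε : 0 ≤ ε) (hε1 : ε ≤ 1) {C₁ D₁ KV : ℝ} (hD₁ : 0 ≤ D₁)
    (hH_ge : ∀ p, -C₁ ≤ H p) (hH_sub_le : ∀ p, H p - p * deriv H p ≤ D₁)
    (hV_le : ∀ x, |V x| ≤ KV) :
    ε * ∫ x in (0 : ℝ)..1, u x ^ 2
      ≤ C₁ + KV + (2 ^ α + (1 + D₁ + KV) * (2 * (1 + D₁ + KV)) ^ α⁻¹) := by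
  obtain ⟨⟨hup, hu⟩, ⟨hmp, hm⟩, hpos, hhjb, hfp⟩ := hsol
  have hKV : 0 ≤ KV := (abs_nonneg _).trans (hV_le 0)
  have hflux := hasDerivAt_deriv_comp_deriv_mul hH hu (hm.differentiable two_ne_zero)
  have hu₁ := fun x => (hu.differentiable two_ne_zero x).hasDerivAt
  have hm₁ := fun x => (hm.differentiable two_ne_zero x).hasDerivAt
  have hu₂ := hu.hasDerivAt_deriv_of_two
  have hm₂ := hm.hasDerivAt_deriv_of_two
  have := hu.continuous; have := hu.continuous_deriv one_le_two
  have := hm.continuous; have := hm.continuous_deriv one_le_two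
  have := hu.continuous_deriv_deriv_of_two; have := hm.continuous_deriv_deriv_of_two
  have := hH.continuous_deriv one_le_two; have := hH.continuous_deriv_deriv_of_two
  -- `Φ` collects the cross terms of `(1 - m)·(HJB) + u·(FP)`.
  have hΦ : ∀ x, HasDerivAt (fun y => u y * deriv m y - m y * deriv u y
      + u y * (deriv H (deriv u y) * m y) + ε * (m y * deriv m y + u y * deriv u y)
      + deriv u y - ε * deriv m y) _ x := fun x =>
    ((((((hu₁ x).mul (hm₂ x)).sub ((hm₁ x).mul (hu₂ x))).add ((hu₁ x).mul (hflux x))).add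
      ((((hm₁ x).mul (hm₂ x)).add ((hu₁ x).mul (hu₂ x))).const_mul ε)).add (hu₂ x)).sub
      ((hm₂ x).const_mul ε)
  have hu_int := integral_le_integral_of_le_add_deriv (f := fun x => ε * u x ^ 2)
    (g := fun _ => C₁ + KV + (2 ^ α + (1 + D₁ + KV) * (2 * (1 + D₁ + KV)) ^ α⁻¹)) (by fun_prop)
    continuous_const hΦ (by fun_prop) (fun x => by
      simp only [hup x, hmp x, hup.deriv x, hmp.deriv x]) fun x => by
    have hrpow : m x ^ (α + 1) = m x ^ α * m x := Real.rpow_add_one (hpos x).ne' α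
    have hH_sub_m : (H (deriv u x) - deriv u x * deriv H (deriv u x)) * m x ≤ D₁ * m x :=
      mul_le_mul_of_nonneg_right (hH_sub_le _) (hpos x).le
    have hVm : V x * m x ≤ KV * m x :=
      mul_le_mul_of_nonneg_right ((le_abs_self _).trans (hV_le x)) (hpos x).le
    have hεm : ε * m x ≤ m x := mul_le_of_le_one_left (hpos x).le hε1
    have hyoung := Real.mul_add_rpow_le hα (by positivity : 0 < 1 + D₁ + KV) (hpos x).le
    have hsq : 0 ≤ ε * (m x ^ 2 + deriv m x ^ 2 + deriv u x ^ 2) := by positivity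
    linear_combination (1 - m x) * hhjb x + u x * hfp x + u x * (hflux x).deriv + hrpow
      + hH_sub_m + hVm + hεm + hyoung + hsq + hH_ge (deriv u x) + neg_le_of_abs_le (hV_le x)
  simpa [integral_const_mul] using hu_int

theorem SolvesMFG.abs_integral_le_one_add_sqrt (hsol : SolvesMFG H V α ε u m)
    (hH : ContDiff ℝ 2 H) (hε : 0 < ε) (hε1 : ε ≤ 1) {K : ℝ}
    (hu_sq : ε * ∫ x in (0 : ℝ)..1, u x ^ 2 ≤ K) : |∫ x in (0 : ℝ)..1, m x| ≤ 1 + √K := by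
  have hεu : |ε * ∫ x in (0 : ℝ)..1, u x| ≤ √K := by
    rw [abs_mul, abs_of_pos hε]
    calc ε * |∫ x in (0 : ℝ)..1, u x|
        ≤ ε * (√K / √ε) := by
          gcongr; exact abs_integral_le_of_mul_integral_sq_le hsol.1.2.continuous hε hu_sq
      _ = √ε * √K := by rw [mul_div_assoc', mul_comm, mul_div_assoc, Real.div_sqrt, mul_comm]
      _ ≤ √K := mul_le_of_le_one_left (Real.sqrt_nonneg _) (Real.sqrt_le_one.2 hε1)
  rw [← sub_eq_of_eq_add (hsol.integral_add_mul_integral_eq_one hH).symm]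
  have := abs_le.1 hεu
  exact abs_le.2 ⟨by linarith, by linarith⟩

theorem SolvesMFG.mul_integral_sq_deriv_le (hsol : SolvesMFG H V α ε u m) (hH : ContDiff ℝ 2 H)
    (hH_convex : ConvexOn ℝ univ H) (hV : ContDiff ℝ 2 V) (hVp : Periodic V 1) (hα : 0 < α)
    (hε : 0 ≤ ε) {KV : ℝ} (hV₂_le : ∀ x, |deriv (deriv V) x| ≤ KV) :
    ∀ g ∈ ({deriv u, deriv (deriv u), deriv m, deriv (deriv m)} : Set (ℝ → ℝ)),
      ε * ∫ x in (0 : ℝ)..1, g x ^ 2 ≤ KV * ∫ x in (0 : ℝ)..1, m x := by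
  obtain ⟨⟨hup, hu⟩, ⟨hmp, hm⟩, hpos, hhjb, hfp⟩ := hsol
  have hflux := hasDerivAt_deriv_comp_deriv_mul hH hu (hm.differentiable two_ne_zero)
  have hu₁ := fun x => (hu.differentiable two_ne_zero x).hasDerivAt
  have hm₁ := fun x => (hm.differentiable two_ne_zero x).hasDerivAt
  have hV₁ := fun x => (hV.differentiable two_ne_zero x).hasDerivAt
  have hu₂ := hu.hasDerivAt_deriv_of_two
  have hm₂ := hm.hasDerivAt_deriv_of_two
  have hV₂ := hV.hasDerivAt_deriv_of_two
  have hHu : ∀ x, HasDerivAt (fun y => H (deriv u y)) (deriv H (deriv u x) * deriv (deriv u) x) x :=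
    fun x => (hH.differentiable two_ne_zero _).hasDerivAt.comp x (hu₂ x)
  have hmα : ∀ x, HasDerivAt (fun y => m y ^ α) (deriv m x * α * m x ^ (α - 1)) x :=
    fun x => (hm₁ x).rpow_const (Or.inl (hpos x).ne')
  have := hu.continuous; have := hu.continuous_deriv one_le_two
  have := hm.continuous; have := hm.continuous_deriv one_le_two
  have := hV.continuous; have := hV.continuous_deriv one_le_two
  have := hu.continuous_deriv_deriv_of_two; have := hm.continuous_deriv_deriv_of_two
  have := hV.continuous_deriv_deriv_of_two; have := hH.continuous
  have := hH.continuous_deriv one_le_two; have := hH.continuous_deriv_deriv_of_two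
  have : Continuous fun x => m x ^ α := hm.continuous.rpow_const fun x => Or.inl (hpos x).ne'
  have : Continuous fun x => m x ^ (α - 1) :=
    hm.continuous.rpow_const fun x => Or.inl (hpos x).ne'
  -- `Φ` collects the cross terms of `m''·(HJB) - u''·(FP)`.
  have hΦ : ∀ x, HasDerivAt (fun y => m y * deriv u y - u y * deriv m y
      - H (deriv u y) * deriv m y - V y * deriv m y + deriv V y * m y + m y ^ α * deriv m y
      + ε * (m y * deriv m y + u y * deriv u y) - deriv u y) _ x := fun x =>
    ((((((((hm₁ x).mul (hu₂ x)).sub ((hu₁ x).mul (hm₂ x))).sub ((hHu x).mul (hm₂ x))).sub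
      ((hV₁ x).mul (hm₂ x))).add ((hV₂ x).mul (hm₁ x))).add ((hmα x).mul (hm₂ x))).add
      ((((hm₁ x).mul (hm₂ x)).add ((hu₁ x).mul (hu₂ x))).const_mul ε)).sub (hu₂ x)
  set S : ℝ → ℝ := fun x => deriv u x ^ 2 + deriv (deriv u) x ^ 2 + deriv m x ^ 2
    + deriv (deriv m) x ^ 2
  have hSc : Continuous S := by fun_prop
  have hS_int := integral_le_integral_of_le_add_deriv (f := fun x => ε * S x)
    (g := fun x => KV * m x) (by fun_prop) (by fun_prop) hΦ (by fun_prop) (fun x => by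
      simp only [hup x, hmp x, hVp x, hup.deriv x, hmp.deriv x, hVp.deriv x]) fun x => by
    have hH₂ : 0 ≤ deriv (deriv H) (deriv u x) * deriv (deriv u) x ^ 2 * m x :=
      mul_nonneg (mul_nonneg (hH_convex.deriv_deriv_nonneg (hH.differentiable two_ne_zero)
        (hH.deriv'.differentiable one_ne_zero _)) (sq_nonneg _)) (hpos x).le
    have hm_rpow : 0 ≤ α * m x ^ (α - 1) * deriv m x ^ 2 := by
      have := Real.rpow_nonneg (hpos x).le (α - 1); positivity
    have hVm : -deriv (deriv V) x * m x ≤ KV * m x :=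
      mul_le_mul_of_nonneg_right ((neg_le_abs _).trans (hV₂_le x)) (hpos x).le
    linear_combination deriv (deriv m) x * hhjb x - deriv (deriv u) x * hfp x
      - deriv (deriv u) x * (hflux x).deriv + hH₂ + hm_rpow + hVm
  intro g hg
  obtain ⟨hgc, hg_le⟩ : Continuous g ∧ ∀ x, g x ^ 2 ≤ S x := by
    rcases hg with rfl | rfl | rfl | rfl <;> refine ⟨by assumption, fun x => ?_⟩ <;>
      linarith [sq_nonneg (deriv u x), sq_nonneg (deriv (deriv u) x), sq_nonneg (deriv m x),
        sq_nonneg (deriv (deriv m) x)]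
  have hg_int : ∫ x in (0 : ℝ)..1, ε * g x ^ 2 ≤ ∫ x in (0 : ℝ)..1, KV * m x :=
    (integral_mono zero_le_one (((hgc.pow 2).const_mul ε).intervalIntegrable 0 1)
      ((hSc.const_mul ε).intervalIntegrable 0 1) fun x =>
        mul_le_mul_of_nonneg_left (hg_le x) hε).trans hS_int
  simpa only [integral_const_mul] using hg_int

end Solution

theorem holder_bounds_general
    (α γ C1 C2 C3 tC1 tC2 tC3 KV : ℝ)
    (hα : 0 < α)
    (hC2 : 0 < C2)
    (htC1 : 0 < tC1) (htC2 : 0 < tC2) :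
    ∃ C > 0, ∀ H V : ℝ → ℝ, ContDiff ℝ 2 H → ConvexOn ℝ Set.univ H →
      Function.Periodic V 1 → ContDiff ℝ 2 V → C2NormBound KV V →
      (∀ p : ℝ, -C1 + C2 * |p| ^ γ ≤ H p ∧ H p ≤ C1 + C3 * |p| ^ γ) →
      (∀ p : ℝ, -tC1 + tC2 * |p| ^ γ ≤ p * deriv H p - H p ∧
          p * deriv H p - H p ≤ tC1 + tC3 * |p| ^ γ) →
      ∀ ε : ℝ, 0 < ε → ε ≤ 1 → ∀ u m : ℝ → ℝ, SolvesMFG H V α ε u m →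
        SupHolderBound (C / Real.sqrt ε) u ∧
        SupHolderBound (C / Real.sqrt ε) (deriv u) ∧
        SupHolderBound (C / Real.sqrt ε) m ∧
        SupHolderBound (C / Real.sqrt ε) (deriv m) := by
  set K₀ := C1 + KV + (2 ^ α + (1 + tC1 + KV) * (2 * (1 + tC1 + KV)) ^ α⁻¹)
  refine ⟨1 + √K₀ + √(KV * (1 + √K₀)), by positivity, ?_⟩
  intro H V hH hH_convex hVp hV hV_le hA1 hA2 ε hε hε1 u m hsol
  have hKV : 0 ≤ KV := (abs_nonneg _).trans (hV_le 0).1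
  have hu_sq : ε * ∫ x in (0 : ℝ)..1, u x ^ 2 ≤ K₀ :=
    hsol.mul_integral_sq_le hH hα hε.le hε1 htC1.le
      (fun p => by linarith [(hA1 p).1, mul_nonneg hC2.le (Real.rpow_nonneg (abs_nonneg p) γ)])
      (fun p => by linarith [(hA2 p).1, mul_nonneg htC2.le (Real.rpow_nonneg (abs_nonneg p) γ)])
      fun x => (hV_le x).1
  have hmean_m := hsol.abs_integral_le_one_add_sqrt hH hε hε1 hu_sq
  have henergy : ∀ g ∈ ({deriv u, deriv (deriv u), deriv m, deriv (deriv m)} : Set (ℝ → ℝ)),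
      ε * ∫ x in (0 : ℝ)..1, g x ^ 2 ≤ KV * (1 + √K₀) := fun g hg =>
    (hsol.mul_integral_sq_deriv_le hH hH_convex hV hVp hα hε.le (fun x => (hV_le x).2.2) g
      hg).trans (mul_le_mul_of_nonneg_left ((le_abs_self _).trans hmean_m) hKV)
  obtain ⟨hu, hm, -⟩ := hsol
  refine ⟨?_, hu.supHolderBound_deriv hε (by positivity) (henergy _ (by simp)), ?_,
    hm.supHolderBound_deriv hε (by positivity) (henergy _ (by simp))⟩
  · refine supHolderBound_of_mul_integral_sq_deriv_le hε hu.1 (hu.2.of_le one_le_two) ?_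
      (henergy _ (by simp))
    exact (abs_integral_le_of_mul_integral_sq_le hu.2.continuous hε hu_sq).trans
      (by gcongr; linarith)
  · refine supHolderBound_of_mul_integral_sq_deriv_le hε hm.1 (hm.2.of_le one_le_two) ?_
      (henergy _ (by simp))
    exact hmean_m.trans (le_div_self (by positivity) (Real.sqrt_pos.2 hε) (Real.sqrt_le_one.2 hε1))

/-- Under assumptions (A1)–(A4), there is a constant `C > 0`,
depending only on `γ, α`, the constants of (A1)–(A2) and on the `C²` norm of
`V`, such that for every `0 < ε ≤ 1` and every solution `(u, m)` of Problem 1,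
each of `u, u', m, m'` is bounded by `C/√ε` and ½-Hölder on `[0,1]` with
constant `C/√ε`. -/
theorem holder_bounds
    (α γ C1 C2 C3 tC1 tC2 tC3 KV : ℝ)
    (hα : 0 < α) (hγ : 1 < γ)
    (hC1 : 0 < C1) (hC2 : 0 < C2) (hC3 : 0 < C3)
    (htC1 : 0 < tC1) (htC2 : 0 < tC2) (htC3 : 0 < tC3) :
    ∃ C > 0, ∀ H V : ℝ → ℝ, ContDiff ℝ 2 H → ConvexOn ℝ Set.univ H →
      Function.Periodic V 1 → ContDiff ℝ 2 V → C2NormBound KV V →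
      (∀ p : ℝ, -C1 + C2 * |p| ^ γ ≤ H p ∧ H p ≤ C1 + C3 * |p| ^ γ) →
      (∀ p : ℝ, -tC1 + tC2 * |p| ^ γ ≤ p * deriv H p - H p ∧
          p * deriv H p - H p ≤ tC1 + tC3 * |p| ^ γ) →
      ∀ ε : ℝ, 0 < ε → ε ≤ 1 → ∀ u m : ℝ → ℝ, SolvesMFG H V α ε u m →
        SupHolderBound (C / Real.sqrt ε) u ∧
        SupHolderBound (C / Real.sqrt ε) (deriv u) ∧
        SupHolderBound (C / Real.sqrt ε) m ∧
        SupHolderBound (C / Real.sqrt ε) (deriv m) :=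
  holder_bounds_general α γ C1 C2 C3 tC1 tC2 tC3 KV hα hC2 htC1 htC2
end
end
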